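/- On the [[4,2,2]] code space S_enc spanned by |φ_{s,t}⟩₁₂ ⊗ |φ_{−s,−t}⟩₃₄ for s,t ∈ {±1}, the restricted physical operators act as logical Paulis: Z₁Z₂ acts as Z̄₁, Z₁Z₃ acts as Z̄₂, Z₂Z₃ acts as Z̄₁Z̄₂, −X₁X₃ acts as X̄₁, X₁X₂ acts as X̄₂, and −X₂X₃ acts as X̄₁X̄₂, where the logical labels (s,t) of a codeword |φ_{s,t}⟩₁₂⊗|φ_{−s,−t}⟩₃₄ give the Z̄₁-eigenvalue s and X̄₂-eigenvalue t. -/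
import Mathlib


open Matrix Kronecker

noncomputable section

def PauliX : Matrix (Fin 2) (Fin 2) ℂ := !![0, 1; 1, 0]
def PauliY : Matrix (Fin 2) (Fin 2) ℂ := !![0, -Complex.I; Complex.I, 0]
def PauliZ : Matrix (Fin 2) (Fin 2) ℂ := !![1, 0; 0, -1]

/-- The Bell state `|φ_{s,t}⟩` for `s, t ∈ {-1, 1}`, the simultaneous eigenvector of
`Z⊗Z` and `X⊗X` with eigenvalues `s` and `t` respectively. -/
def bell (s t : ℤ) : Fin 2 × Fin 2 → ℂ := fun p =>
  (Real.sqrt 2 : ℂ)⁻¹ *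
    (if p.2 = (if s = 1 then p.1 else p.1 + 1) then (if p.1 = 0 then 1 else (t : ℂ)) else 0)

/-- The single-qubit operator `A` acting on qubit `i` of a register of qubits
indexed by `ι` (identity on all other qubits). -/
def pauliAt {ι : Type*} [Fintype ι] [DecidableEq ι] (A : Matrix (Fin 2) (Fin 2) ℂ)
    (i : ι) : Matrix (ι → Fin 2) (ι → Fin 2) ℂ :=
  fun f g => A (f i) (g i) * ∏ j ∈ Finset.univ.erase i, (if f j = g j then 1 else 0)

/-- The 4-qubit penalty Hamiltonian
`H_pen = g_x X₁X₂ + g_z Z₁Z₂ + g_x X₃X₄ + g_z Z₃Z₄`. -/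
def Hpen4 (gx gz : ℝ) : Matrix (Fin 4 → Fin 2) (Fin 4 → Fin 2) ℂ :=
  (gx : ℂ) • (pauliAt PauliX (0 : Fin 4) * pauliAt PauliX (1 : Fin 4)) +
  (gz : ℂ) • (pauliAt PauliZ (0 : Fin 4) * pauliAt PauliZ (1 : Fin 4)) +
  (gx : ℂ) • (pauliAt PauliX (2 : Fin 4) * pauliAt PauliX (3 : Fin 4)) +
  (gz : ℂ) • (pauliAt PauliZ (2 : Fin 4) * pauliAt PauliZ (3 : Fin 4))

/-- The codeword `|φ_{s,t}⟩₁₂ ⊗ |φ_{−s,−t}⟩₃₄` of the [[4,2,2]] Hamiltonian code. -/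
def cw (s t : ℤ) : (Fin 4 → Fin 2) → ℂ := fun f =>
  bell s t (f 0, f 1) * bell (-s) (-t) (f 2, f 3)

/-- The set of the four codewords of the [[4,2,2]] Hamiltonian code. -/
def codewords : Set ((Fin 4 → Fin 2) → ℂ) :=
  {v | ∃ s t : ℤ, (s = 1 ∨ s = -1) ∧ (t = 1 ∨ t = -1) ∧ v = cw s t}

lemma pauliAt_mulVec {ι : Type*} [Fintype ι] [DecidableEq ι] (A : Matrix (Fin 2) (Fin 2) ℂ)
    (i : ι) (v : (ι → Fin 2) → ℂ) (f : ι → Fin 2) :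
    (pauliAt A i).mulVec v f = ∑ x : Fin 2, A (f i) x * v (Function.update f i x) := by
  classical
  rw [Matrix.mulVec, dotProduct]
  rw [← Finset.sum_subset (Finset.subset_univ ((Finset.univ : Finset (Fin 2)).image (Function.update f i)))]
  · rw [Finset.sum_image (by
      intro x _ y _ h
      have := congrFun h i
      simpa using this)]
    refine Finset.sum_congr rfl fun x _ => ?_
    rw [pauliAt, Function.update_self]
    congr 1
    rw [Finset.prod_eq_one]
    · ring
    intro j hj
    rw [Function.update_of_ne (Finset.mem_erase.mp hj).1]
    simp
  · intro g _ hg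
    have hne : g ≠ Function.update f i (g i) := by
      intro h
      exact hg (Finset.mem_image.mpr ⟨g i, Finset.mem_univ _, h.symm⟩)
    obtain ⟨j, hj⟩ : ∃ j, g j ≠ Function.update f i (g i) j := by
      by_contra h
      push_neg at h
      exact hne (funext h)
    have hji : j ≠ i := by rintro rfl; simp at hj
    rw [Function.update_of_ne hji] at hj
    have hz : (if f j = g j then (1:ℂ) else 0) = 0 := by simp [Ne.symm hj]
    rw [pauliAt, Finset.prod_eq_zero (Finset.mem_erase.mpr ⟨hji, Finset.mem_univ j⟩) hz, mul_zero, zero_mul]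

lemma key422 (A B : Matrix (Fin 2) (Fin 2) ℂ) (i j : Fin 4) (v : (Fin 4 → Fin 2) → ℂ)
    (f : Fin 4 → Fin 2) :
    (pauliAt A i * pauliAt B j).mulVec v f
      = ∑ x : Fin 2, ∑ y : Fin 2, A (f i) x *
          (B (Function.update f i x j) y * v (Function.update (Function.update f i x) j y)) := by
  rw [← Matrix.mulVec_mulVec, pauliAt_mulVec]
  exact Finset.sum_congr rfl fun x _ => by rw [pauliAt_mulVec, Finset.mul_sum]

lemma fin2cases (x : Fin 2) : x = 0 ∨ x = 1 := by omega

set_option maxHeartbeats 2000000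

/-- Logical operators of the [[4,2,2]] Hamiltonian code: on the codeword basis
`cw s t = |φ_{s,t}⟩₁₂ ⊗ |φ_{−s,−t}⟩₃₄` (first logical qubit in the `Z̄`-eigenstate `s`,
second logical qubit in the `X̄`-eigenstate `t`), the physical operators `Z₁Z₂`, `Z₁Z₃`,
`Z₂Z₃`, `−X₁X₃`, `X₁X₂`, `−X₂X₃` act as the logical operators `Z̄₁`, `Z̄₂`, `Z̄₁Z̄₂`,
`X̄₁`, `X̄₂`, `X̄₁X̄₂`, respectively. -/
theorem code422_logical_operators (s t : ℤ) (hs : s = 1 ∨ s = -1) (ht : t = 1 ∨ t = -1) :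
    -- Z̄₁ : eigenvalue s
    (pauliAt PauliZ (0 : Fin 4) * pauliAt PauliZ (1 : Fin 4)).mulVec (cw s t) = (s : ℂ) • cw s t ∧
    -- Z̄₂ : flips the X̄-label t of the second logical qubit
    (pauliAt PauliZ (0 : Fin 4) * pauliAt PauliZ (2 : Fin 4)).mulVec (cw s t) = cw s (-t) ∧
    -- Z̄₁Z̄₂
    (pauliAt PauliZ (1 : Fin 4) * pauliAt PauliZ (2 : Fin 4)).mulVec (cw s t) = (s : ℂ) • cw s (-t) ∧
    -- X̄₁ : flips the Z̄-label s of the first logical qubit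
    (-(pauliAt PauliX (0 : Fin 4) * pauliAt PauliX (2 : Fin 4))).mulVec (cw s t) = cw (-s) t ∧
    -- X̄₂ : eigenvalue t
    (pauliAt PauliX (0 : Fin 4) * pauliAt PauliX (1 : Fin 4)).mulVec (cw s t) = (t : ℂ) • cw s t ∧
    -- X̄₁X̄₂
    (-(pauliAt PauliX (1 : Fin 4) * pauliAt PauliX (2 : Fin 4))).mulVec (cw s t) = (t : ℂ) • cw (-s) t := by
  refine ⟨?_, ?_, ?_, ?_, ?_, ?_⟩ <;>
  [skip; skip; skip; rw [Matrix.neg_mulVec]; skip; rw [Matrix.neg_mulVec]] <;>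
  · funext f
    first
    | rw [Pi.neg_apply, key422,
        show ∀ a b : ℂ, -a = b ↔ a = -b from fun a b => neg_eq_iff_eq_neg]
    | rw [key422]
    simp only [Fin.sum_univ_two, cw, Function.update_apply, Fin.reduceEq, if_true, if_false,
      ite_true, ite_false, Function.update_self, Pi.smul_apply, smul_eq_mul]
    rcases hs with rfl | rfl <;> rcases ht with rfl | rfl <;>
    rcases fin2cases (f 0) with h0 | h0 <;> rcases fin2cases (f 1) with h1 | h1 <;>
    rcases fin2cases (f 2) with h2 | h2 <;> rcases fin2cases (f 3) with h3 | h3 <;>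
    simp [bell, h0, h1, h2, h3, PauliZ, PauliX]

end
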